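/- (Locality of per-agent value functions: neighbourhood growth with planning horizon.) Let I be a finite index set, for each i ∈ I let S_i be a nonempty finite type, and let S = Π_{i∈I} S_i. Let N : I → Finset I be a neighbourhood map with i ∈ N(i) for all i, and define iterated neighbourhoods by N^0(i) = {i} and N^{k+1}(i) = ⋃_{j∈N^k(i)} N(j). Fix a horizon H ≥ 1; for each 0 ≤ t ≤ H−1 and i ∈ I let r_i^t : S_i → ℝ and let Q_i^t : S → (S_i → ℝ) be a kernel with Q_i^t(s) a probability mass function on S_i for all s ∈ S. Assume each kernel is local: for all s, s̄ ∈ S, if s_j = s̄_j for all j ∈ N(i) then Q_i^t(s) = Q_i^t(s̄). Define per-agent value functions V_i^t : S → ℝ by V_i^{H−1}(s) = r_i^{H−1}(s_i) and V_i^t(s) = r_i^t(s_i) + Σ_{s'∈S} (Π_{j∈I} Q_j^t(s)(s'_j)) · V_i^{t+1}(s') for 0 ≤ t < H−1. Then for every t and i, V_i^t depends only on the states of intersections in the (H−1−t)-fold iterated neighbourhood of i: for all s, s̄ ∈ S, if s_j = s̄_j for all j ∈ N^{H−1−t}(i), then V_i^t(s) = V_i^t(s̄). -/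

import Mathlib

/-!
When a function that depends only on the coordinates in `A` is summed against a product of
probability kernels, the kernels of the coordinates outside `A` sum out to `1`, so the result
depends only on the kernels of the coordinates in `A`. Since the kernel of `j` sees only `N j`,
one Bellman backup enlarges the set of relevant intersections from `A` to `⋃ j ∈ A, N j`;
backward induction from the last step, where `V i` sees only `i`, gives the iterated
neighbourhoods.
-/

open Finset Function

def iterNbhd {I : Type*} [DecidableEq I] (N : I → Finset I) : ℕ → I → Finset I
  | 0, i => {i}
  | k + 1, i => (iterNbhd N k i).biUnion N

section Marginalization

variable {I : Type*} [Fintype I] {S : I → Type*} {R : Type*} [CommSemiring R]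

theorem prod_piEquivPiSubtypeProd_symm (P : I → Prop) [DecidablePred P] (p : ∀ j, S j → R)
    (a : ∀ j : {j // P j}, S j) (b : ∀ j : {j // ¬P j}, S j) :
    ∏ j, p j ((Equiv.piEquivPiSubtypeProd P S).symm (a, b) j) =
      (∏ j : {j // P j}, p j (a j)) * ∏ j : {j // ¬P j}, p j (b j) := by
  rw [← Fintype.prod_subtype_mul_prod_subtype P]
  congr 1 <;> exact prod_congr rfl fun j _ => by simp [j.2]

variable [DecidableEq I] [∀ i, Fintype (S i)]

theorem sum_prod_mul_eq_sum_subtype_of_dependsOn (s : Set I) [DecidablePred (· ∈ s)]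
    {p : ∀ j, S j → R} (hp : ∀ j ∉ s, ∑ x, p j x = 1) {f : (∀ j, S j) → R}
    (hf : DependsOn f s) (b₀ : ∀ j : {j // j ∉ s}, S j) :
    ∑ x : ∀ j, S j, (∏ j, p j (x j)) * f x =
      ∑ a : ∀ j : {j // j ∈ s}, S j, (∏ j : {j // j ∈ s}, p j (a j)) *
        f ((Equiv.piEquivPiSubtypeProd (· ∈ s) S).symm (a, b₀)) := by
  set e := Equiv.piEquivPiSubtypeProd (· ∈ s) S
  rw [← e.symm.sum_comp, Fintype.sum_prod_type]
  refine sum_congr rfl fun a _ => ?_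
  have hfa : ∀ b, f (e.symm (a, b)) = f (e.symm (a, b₀)) :=
    fun b => hf fun j hj => by simp [e, hj]
  calc ∑ b, (∏ j, p j (e.symm (a, b) j)) * f (e.symm (a, b))
      = (∏ j : {j // j ∈ s}, p j (a j)) * f (e.symm (a, b₀)) *
          ∏ j : {j // j ∉ s}, ∑ x, p j x := by
        rw [Fintype.prod_sum, mul_sum]
        refine sum_congr rfl fun b _ => ?_
        rw [prod_piEquivPiSubtypeProd_symm, hfa]
        ring
    _ = _ := by rw [prod_eq_one fun (j : {j // j ∉ s}) _ => hp j j.2, mul_one]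

theorem sum_prod_mul_congr_of_dependsOn (s : Set I) {p q : ∀ j, S j → R}
    (hpq : ∀ j ∈ s, p j = q j) (hp : ∀ j ∉ s, ∑ x, p j x = 1)
    (hq : ∀ j ∉ s, ∑ x, q j x = 1) {f : (∀ j, S j) → R} (hf : DependsOn f s) :
    ∑ x : ∀ j, S j, (∏ j, p j (x j)) * f x =
      ∑ x : ∀ j, S j, (∏ j, q j (x j)) * f x := by
  classical
  rcases isEmpty_or_nonempty (∀ j, S j) with _ | ⟨⟨x₀⟩⟩
  · simp
  rw [sum_prod_mul_eq_sum_subtype_of_dependsOn s hp hf (fun j => x₀ j),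
    sum_prod_mul_eq_sum_subtype_of_dependsOn s hq hf (fun j => x₀ j)]
  refine sum_congr rfl fun a _ => ?_
  rw [prod_congr rfl fun j _ => by rw [hpq j j.2]]

theorem dependsOn_sum_prod_mul_biUnion (N : I → Finset I)
    {Q : ∀ j, (∀ i, S i) → S j → R} (hQ : ∀ j, DependsOn (Q j) (N j))
    (hQsum : ∀ x j, ∑ y, Q j x y = 1) (A : Finset I) {f : (∀ j, S j) → R}
    (hf : DependsOn f A) :
    DependsOn (fun x => ∑ y : ∀ j, S j, (∏ j, Q j x (y j)) * f y) (A.biUnion N) :=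
  fun x x' hxx' => sum_prod_mul_congr_of_dependsOn A
    (fun j hj => hQ j fun l hl => hxx' l (mem_biUnion.2 ⟨j, hj, hl⟩))
    (fun j _ => hQsum x j) (fun j _ => hQsum x' j) hf

end Marginalization

theorem mem_iterNbhd_self {I : Type*} [DecidableEq I] {N : I → Finset I}
    (hN : ∀ i, i ∈ N i) (k : ℕ) (i : I) : i ∈ iterNbhd N k i := by
  induction k with
  | zero => exact mem_singleton_self i
  | succ k ih => exact mem_biUnion.2 ⟨i, ih, hN i⟩

theorem decMDP_value_locality_general
    {I : Type*} [Fintype I] [DecidableEq I]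
    (S : I → Type*) [∀ i, Fintype (S i)]
    (N : I → Finset I) (hNrefl : ∀ i, i ∈ N i)
    (H : ℕ)
    (r : ℕ → ∀ i, S i → ℝ)
    (Q : ℕ → ∀ i : I, (∀ j, S j) → S i → ℝ)
    (hQsum : ∀ t, t ≤ H - 1 → ∀ i, ∀ s : ∀ j, S j, ∑ x : S i, Q t i s x = 1)
    (hQlocal : ∀ t i, ∀ s sb : ∀ j, S j,
      (∀ j ∈ N i, s j = sb j) → Q t i s = Q t i sb)
    (Vag : ℕ → I → (∀ j, S j) → ℝ)
    (hVaglast : ∀ i, ∀ s : ∀ j, S j, Vag (H - 1) i s = r (H - 1) i (s i))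
    (hVagstep : ∀ t, t < H - 1 → ∀ i, ∀ s : ∀ j, S j,
      Vag t i s = r t i (s i) +
        ∑ s' : ∀ j, S j, (∏ j, Q t j s (s' j)) * Vag (t + 1) i s') :
    ∀ t, t ≤ H - 1 → ∀ i, ∀ s sb : ∀ j, S j,
      (∀ j ∈ iterNbhd N (H - 1 - t) i, s j = sb j) → Vag t i s = Vag t i sb := by
  have hlocal : ∀ k ≤ H - 1, ∀ i, DependsOn (Vag (H - 1 - k) i) (iterNbhd N k i) := by
    intro k
    induction k with
    | zero =>
      intro _ i s sb hs
      rw [Nat.sub_zero, hVaglast, hVaglast, hs i (mem_iterNbhd_self hNrefl 0 i)]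
    | succ k ih =>
      intro hk i s sb hs
      have hnext : H - 1 - (k + 1) + 1 = H - 1 - k := by omega
      rw [hVagstep _ (by omega), hVagstep _ (by omega), hnext,
        hs i (mem_iterNbhd_self hNrefl (k + 1) i)]
      congr 1
      exact dependsOn_sum_prod_mul_biUnion N (fun j s sb => hQlocal _ j s sb)
        (fun s j => hQsum _ (by omega) j s) _ (ih (by omega) i) hs
  intro t ht i s sb hs
  have hdep := hlocal (H - 1 - t) (by omega) i
  rw [Nat.sub_sub_self ht] at hdep
  exact hdep hs

/-- Locality of per-agent value functions.  If each local kernel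
depends only on the states of the agent's neighbours, then the per-agent value
function at time `t` depends only on the states of intersections in the
`(H-1-t)`-fold iterated neighbourhood of the agent. -/
theorem decMDP_value_locality
    {I : Type*} [Fintype I] [DecidableEq I]
    (S : I → Type*) [∀ i, Fintype (S i)] [∀ i, Nonempty (S i)]
    (N : I → Finset I) (hNrefl : ∀ i, i ∈ N i)
    (H : ℕ) (hH : 1 ≤ H)
    (r : ℕ → ∀ i, S i → ℝ)
    (Q : ℕ → ∀ i : I, (∀ j, S j) → S i → ℝ)
    (hQnonneg : ∀ t, t ≤ H - 1 → ∀ i, ∀ s : ∀ j, S j, ∀ x : S i, 0 ≤ Q t i s x)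
    (hQsum : ∀ t, t ≤ H - 1 → ∀ i, ∀ s : ∀ j, S j, ∑ x : S i, Q t i s x = 1)
    (hQlocal : ∀ t i, ∀ s sb : ∀ j, S j,
      (∀ j ∈ N i, s j = sb j) → Q t i s = Q t i sb)
    (Vag : ℕ → I → (∀ j, S j) → ℝ)
    (hVaglast : ∀ i, ∀ s : ∀ j, S j, Vag (H - 1) i s = r (H - 1) i (s i))
    (hVagstep : ∀ t, t < H - 1 → ∀ i, ∀ s : ∀ j, S j,
      Vag t i s = r t i (s i) +
        ∑ s' : ∀ j, S j, (∏ j, Q t j s (s' j)) * Vag (t + 1) i s') :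
    ∀ t, t ≤ H - 1 → ∀ i, ∀ s sb : ∀ j, S j,
      (∀ j ∈ iterNbhd N (H - 1 - t) i, s j = sb j) → Vag t i s = Vag t i sb :=
  decMDP_value_locality_general S N hNrefl H r Q hQsum hQlocal Vag hVaglast hVagstep
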